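/- Let K be a field, d : K → K a derivation, σ a finite index set, and S a set of multivariable polynomials in K[x_i : i ∈ σ]. Suppose a, b : σ → K are points such that f(a) = 0 and τf(a,b) = 0 for every f ∈ S. Then for every g in the ideal generated by S one also has g(a) = 0 and τg(a,b) = 0. -/

import Mathlib

open MvPolynomial

/-- Evaluation at `a` of the polynomial `f^d` obtained by applying `d : K → K`
to each coefficient of `f`. -/
noncomputable def evalCoeffD {K : Type*} [Field K] {σ : Type*} [Fintype σ]
    (d : K → K) (f : MvPolynomial σ K) (a : σ → K) : K :=
  ∑ m ∈ f.support, d (f.coeff m) * ∏ i, a i ^ m i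

/-- The prolongation `τf(a,b) = f^d(a) + Σ_i (∂f/∂x_i)(a) · b_i`. -/
noncomputable def tauProlong {K : Type*} [Field K] {σ : Type*} [Fintype σ]
    (d : K → K) (f : MvPolynomial σ K) (a b : σ → K) : K :=
  evalCoeffD d f a + ∑ i, (eval a (pderiv i f)) * b i

/-!
A map `D` that is additive and Leibniz relative to a ring hom `φ` is the same thing as the ring
hom `x ↦ φ x + D x • ε` into the dual numbers. For `d` itself this gives a ring hom `K → K[ε]`;
evaluating `f` at `a` with its coefficients pushed through it yields `f(a) + f^d(a) • ε`, so
`f ↦ f^d(a)`, and with it `f ↦ τf(a,b)`, is Leibniz relative to evaluation at `a`. Hence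
`f ↦ f(a) + τf(a,b) • ε` is a ring hom, and its kernel is an ideal containing `S`.
-/

open DualNumber TrivSqZeroExt

namespace DualNumber

variable {R S : Type*} [Semiring R] [CommRing S]

def ringHomOfLeibniz (φ : R →+* S) (D : R → S) (hadd : ∀ x y, D (x + y) = D x + D y)
    (hmul : ∀ x y, D (x * y) = φ x * D y + φ y * D x) : R →+* S[ε] where
  toFun x := inl (φ x) + inr (D x)
  map_zero' := by
    have hD : D 0 = 0 := by simpa using hadd 0 0
    simp [hD]
  map_one' := by
    have hD : D 1 = 0 := by simpa using hmul 1 1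
    simp [hD]
  map_add' x y := by
    ext <;> simp [hadd]
  map_mul' x y := by
    ext
    · simp
    · simp [hmul]
      ring

theorem ringHomOfLeibniz_eq_zero_iff {φ : R →+* S} {D : R → S}
    {hadd : ∀ x y, D (x + y) = D x + D y} {hmul : ∀ x y, D (x * y) = φ x * D y + φ y * D x}
    (x : R) : ringHomOfLeibniz φ D hadd hmul x = 0 ↔ φ x = 0 ∧ D x = 0 := by
  simp [ringHomOfLeibniz, TrivSqZeroExt.ext_iff]

end DualNumber

section Prolongation

variable {K : Type*} [Field K] {σ : Type*} [Fintype σ] {d : K → K}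
    (hadd : ∀ x y, d (x + y) = d x + d y) (hmul : ∀ x y, d (x * y) = x * d y + y * d x)

theorem eval₂_ringHomOfLeibniz (f : MvPolynomial σ K) (a : σ → K) :
    eval₂ (ringHomOfLeibniz (RingHom.id K) d hadd hmul) (fun i => inl (a i)) f =
      inl (eval a f) + inr (evalCoeffD d f a) := by
  have hmonomial (m : σ →₀ ℕ) : ∏ i, (inl (a i ^ m i) : K[ε]) = inl (∏ i, a i ^ m i) :=
    (map_prod (inlHom K K) _ _).symm
  rw [eval₂_eq', eval_eq', evalCoeffD]
  ext <;> simp [hmonomial, fst_sum, snd_sum, ringHomOfLeibniz]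

include hadd hmul

theorem evalCoeffD_add (f g : MvPolynomial σ K) (a : σ → K) :
    evalCoeffD d (f + g) a = evalCoeffD d f a + evalCoeffD d g a := by
  simpa [eval₂_ringHomOfLeibniz hadd hmul] using congrArg snd
    (eval₂_add (ringHomOfLeibniz (RingHom.id K) d hadd hmul) (fun i => inl (a i)) (p := f) (q := g))

theorem evalCoeffD_mul (f g : MvPolynomial σ K) (a : σ → K) :
    evalCoeffD d (f * g) a = eval a f * evalCoeffD d g a + eval a g * evalCoeffD d f a := by
  have h := congrArg snd
    (eval₂_mul (ringHomOfLeibniz (RingHom.id K) d hadd hmul) (fun i => inl (a i)) (p := f) (q := g))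
  simp only [eval₂_ringHomOfLeibniz hadd hmul, DualNumber.snd_mul, fst_add, snd_add, fst_inl,
    snd_inl, fst_inr, snd_inr, zero_add, add_zero] at h
  rw [h]
  ring

theorem tauProlong_add (f g : MvPolynomial σ K) (a b : σ → K) :
    tauProlong d (f + g) a b = tauProlong d f a b + tauProlong d g a b := by
  simp only [tauProlong, evalCoeffD_add hadd hmul, map_add, add_mul, Finset.sum_add_distrib]
  ring

theorem tauProlong_mul (f g : MvPolynomial σ K) (a b : σ → K) :
    tauProlong d (f * g) a b = eval a f * tauProlong d g a b + eval a g * tauProlong d f a b := by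
  simp only [tauProlong, evalCoeffD_mul hadd hmul, Derivation.leibniz, map_add, smul_eq_mul,
    map_mul, add_mul, Finset.sum_add_distrib, mul_add, Finset.mul_sum, mul_assoc]
  ring

end Prolongation

theorem tauProlong_vanish_ideal_span {K : Type*} [Field K] {σ : Type*} [Fintype σ]
    (d : K → K)
    (hadd : ∀ x y, d (x + y) = d x + d y)
    (hmul : ∀ x y, d (x * y) = x * d y + y * d x)
    (S : Set (MvPolynomial σ K)) (a b : σ → K)
    (hS : ∀ f ∈ S, eval a f = 0 ∧ tauProlong d f a b = 0) :
    ∀ g ∈ Ideal.span S, eval a g = 0 ∧ tauProlong d g a b = 0 := by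
  let τ := ringHomOfLeibniz (eval a) (tauProlong d · a b)
    (tauProlong_add hadd hmul · · a b) (tauProlong_mul hadd hmul · · a b)
  have hspan : Ideal.span S ≤ RingHom.ker τ :=
    Ideal.span_le.2 fun f hf => (ringHomOfLeibniz_eq_zero_iff f).2 (hS f hf)
  exact fun g hg => (ringHomOfLeibniz_eq_zero_iff g).1 (hspan hg)
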